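/- Two binary strings s and t are equicomposable if and only if P_s(x,y) P_s(1/x,1/y) = P_t(x,y) P_t(1/x,1/y) as Laurent polynomials. -/

import Mathlib

open MvPolynomial

/-- Multiset of compositions of all nonempty contiguous substrings. -/
def subComps (s : List Bool) : Multiset (Multiset Bool) :=
  ↑(((List.range s.length).flatMap fun i =>
      (List.range (s.length - i)).map fun j =>
        (((s.drop i).take (j + 1) : List Bool) : Multiset Bool)))

def Equicomposable (s t : List Bool) : Prop := subComps s = subComps t

def interleave (s t : List Bool) : List Bool := s ++ t.flatMap (fun b => b :: s)

noncomputable def gen (s : List Bool) : MvPolynomial (Fin 2) ℤ :=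
  ∑ i ∈ Finset.range (s.length + 1),
    X 0 ^ ((s.take i).count false) * X 1 ^ (i - (s.take i).count false)

noncomputable def recip (P : MvPolynomial (Fin 2) ℤ) : MvPolynomial (Fin 2) ℤ :=
  ∑ m ∈ P.support,
    monomial (Finsupp.single 0 (P.degreeOf 0 - m 0) + Finsupp.single 1 (P.degreeOf 1 - m 1))
      (coeff m P)

abbrev F := FractionRing (MvPolynomial (Fin 2) ℤ)

noncomputable def toF (P : MvPolynomial (Fin 2) ℤ) : F :=
  algebraMap (MvPolynomial (Fin 2) ℤ) F P

noncomputable def invEval (P : MvPolynomial (Fin 2) ℤ) : F :=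
  MvPolynomial.aeval (fun i => (algebraMap (MvPolynomial (Fin 2) ℤ) F (X i))⁻¹) P

noncomputable def compPoly (s : List Bool) : MvPolynomial (Fin 2) ℤ :=
  (((List.range s.length).flatMap fun i =>
      (List.range (s.length - i)).map fun j =>
        X 0 ^ (((s.drop i).take (j + 1)).count false)
          * X 1 ^ (((s.drop i).take (j + 1)).count true) :
      List (MvPolynomial (Fin 2) ℤ))).sum

noncomputable def toUni (P : MvPolynomial (Fin 2) ℤ) : Polynomial ℤ :=
  MvPolynomial.aeval (fun _ => Polynomial.X) P


lemma cfct (l : List Bool) : l.count false + l.count true = l.length := by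
  induction l with
  | nil => simp
  | cons b l ih => cases b <;> simp [List.count_cons] <;> omega

lemma take_count_add (s : List Bool) (c : Bool) {j i : ℕ} (h : j ≤ i) :
    (s.take i).count c = (s.take j).count c + ((s.drop j).take (i - j)).count c := by
  conv_lhs => rw [show i = j + (i - j) by omega, List.take_add, List.count_append]

lemma xne (i : Fin 2) : toF (X i) ≠ 0 := fun h =>
  X_ne_zero (R := ℤ) i (IsFractionRing.injective (MvPolynomial (Fin 2) ℤ) F (by rw [map_zero]; exact h))

lemma pow_mul_inv_pow {u : F} (hu : u ≠ 0) {p p' : ℕ} (h : p' ≤ p) :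
    u ^ p * (u⁻¹) ^ p' = u ^ (p - p') := by
  rw [inv_pow, eq_comm, ← div_eq_mul_inv, eq_div_iff (pow_ne_zero _ hu), ← pow_add]
  congr 1; omega

lemma inv_pow_mul_pow {u : F} (hu : u ≠ 0) {p p' : ℕ} (h : p' ≤ p) :
    u ^ p' * (u⁻¹) ^ p = (u⁻¹) ^ (p - p') := by
  have h2 := pow_mul_inv_pow (inv_ne_zero hu) h
  rw [inv_inv] at h2
  rw [mul_comm]; exact h2

lemma toF_pp (p q : ℕ) : toF (X 0 ^ p * X 1 ^ q) = toF (X 0) ^ p * toF (X 1) ^ q := by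
  simp [toF, map_mul, map_pow]

lemma invEval_pp (p q : ℕ) : invEval (X 0 ^ p * X 1 ^ q) = (toF (X 0))⁻¹ ^ p * (toF (X 1))⁻¹ ^ q := by
  simp [invEval, toF, map_mul, map_pow]

lemma cross {p q p' q' : ℕ} (hp : p' ≤ p) (hq : q' ≤ q) :
    toF (X 0 ^ p * X 1 ^ q) * invEval (X 0 ^ p' * X 1 ^ q') = toF (X 0 ^ (p - p') * X 1 ^ (q - q')) := by
  rw [toF_pp, invEval_pp, toF_pp]
  rw [show toF (X 0) ^ p * toF (X 1) ^ q * ((toF (X 0))⁻¹ ^ p' * (toF (X 1))⁻¹ ^ q')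
      = (toF (X 0) ^ p * (toF (X 0))⁻¹ ^ p') * (toF (X 1) ^ q * (toF (X 1))⁻¹ ^ q') by ring]
  rw [pow_mul_inv_pow (xne 0) hp, pow_mul_inv_pow (xne 1) hq]

lemma cross' {p q p' q' : ℕ} (hp : p' ≤ p) (hq : q' ≤ q) :
    toF (X 0 ^ p' * X 1 ^ q') * invEval (X 0 ^ p * X 1 ^ q) = invEval (X 0 ^ (p - p') * X 1 ^ (q - q')) := by
  rw [toF_pp, invEval_pp, invEval_pp]
  rw [show toF (X 0) ^ p' * toF (X 1) ^ q' * ((toF (X 0))⁻¹ ^ p * (toF (X 1))⁻¹ ^ q)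
      = (toF (X 0) ^ p' * (toF (X 0))⁻¹ ^ p) * (toF (X 1) ^ q' * (toF (X 1))⁻¹ ^ q) by ring]
  rw [inv_pow_mul_pow (xne 0) hp, inv_pow_mul_pow (xne 1) hq]

lemma list_range_sum {M : Type*} [AddCommMonoid M] (f : ℕ → M) (n : ℕ) :
    ((List.range n).map f).sum = ∑ i ∈ Finset.range n, f i := by
  rfl

noncomputable def term (l : List Bool) : MvPolynomial (Fin 2) ℤ :=
  X 0 ^ (l.count false) * X 1 ^ (l.count true)

def subl (s : List Bool) (i e : ℕ) : List Bool := (s.drop i).take (e - i)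

lemma tri_form {M : Type*} [AddCommMonoid M] (n : ℕ) (h : ℕ → ℕ → M) :
    ∑ i ∈ Finset.range n, ∑ j ∈ Finset.range (n - i), h i (i + j + 1)
      = ∑ e ∈ Finset.range (n + 1), ∑ i ∈ Finset.range e, h i e := by
  have h1 : ∀ i, ∑ j ∈ Finset.range (n - i), h i (i + j + 1)
      = ∑ e ∈ Finset.Ico (i + 1) (n + 1), h i e := by
    intro i
    rw [Finset.sum_Ico_eq_sum_range, show n + 1 - (i + 1) = n - i by omega]
    exact Finset.sum_congr rfl fun j _ => by congr 1; omega
  simp_rw [h1]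
  have h2 : ∑ i ∈ Finset.range (n + 1), ∑ e ∈ Finset.Ico (i + 1) (n + 1), h i e
      = ∑ i ∈ Finset.range n, ∑ e ∈ Finset.Ico (i + 1) (n + 1), h i e := by
    rw [Finset.sum_range_succ]; simp
  rw [← h2, Finset.range_eq_Ico, Finset.sum_Ico_Ico_comm']; simp only [Nat.Ico_zero_eq_range]

lemma compPoly_tri (s : List Bool) :
    compPoly s = ∑ e ∈ Finset.range (s.length + 1), ∑ i ∈ Finset.range e, term (subl s i e) := by
  rw [compPoly]
  rw [show ((List.range s.length).flatMap fun i =>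
      (List.range (s.length - i)).map fun j =>
        X 0 ^ (((s.drop i).take (j + 1)).count false)
          * X 1 ^ (((s.drop i).take (j + 1)).count true) :
      List (MvPolynomial (Fin 2) ℤ))
    = ((List.range s.length).map fun i =>
      ((List.range (s.length - i)).map fun j => term (subl s i (i + j + 1)))).flatten by
      rw [List.flatMap_def]
      congr 1
      refine List.map_congr_left fun i _ => ?_
      refine List.map_congr_left fun j _ => ?_
      simp [term, subl, show i + j + 1 - i = j + 1 by omega]]
  rw [List.sum_flatten, List.map_map]
  rw [list_range_sum]
  rw [← tri_form]
  exact Finset.sum_congr rfl fun i _ => (list_range_sum _ _).symm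

noncomputable def mon (s : List Bool) (k : ℕ) : MvPolynomial (Fin 2) ℤ :=
  X 0 ^ ((s.take k).count false) * X 1 ^ (k - (s.take k).count false)

lemma gen_eq (s : List Bool) : gen s = ∑ i ∈ Finset.range (s.length + 1), mon s i := rfl

lemma toF_sum {ι : Type*} (t : Finset ι) (f : ι → MvPolynomial (Fin 2) ℤ) :
    toF (∑ i ∈ t, f i) = ∑ i ∈ t, toF (f i) :=
  map_sum (algebraMap (MvPolynomial (Fin 2) ℤ) F) f t

lemma invEval_sum {ι : Type*} (t : Finset ι) (f : ι → MvPolynomial (Fin 2) ℤ) :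
    invEval (∑ i ∈ t, f i) = ∑ i ∈ t, invEval (f i) :=
  map_sum (MvPolynomial.aeval fun i => (algebraMap (MvPolynomial (Fin 2) ℤ) F (X i))⁻¹) f t

lemma counts_aux (s : List Bool) {j i : ℕ} (hji : j ≤ i) (hin : i ≤ s.length) :
    (s.take j).count false ≤ (s.take i).count false ∧
    j - (s.take j).count false ≤ i - (s.take i).count false ∧
    (s.take i).count false - (s.take j).count false = (subl s j i).count false ∧
    (i - (s.take i).count false) - (j - (s.take j).count false) = (subl s j i).count true := by
  have h1 := take_count_add s false hji
  have h2 := take_count_add s true hji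
  have h3 := cfct (s.take i)
  have h4 := cfct (s.take j)
  have l3 : (s.take i).length = i := by rw [List.length_take]; omega
  have l4 : (s.take j).length = j := by rw [List.length_take]; omega
  rw [l3] at h3; rw [l4] at h4
  rw [subl]
  omega

lemma key1 (s : List Bool) {j i : ℕ} (hji : j ≤ i) (hin : i ≤ s.length) :
    toF (mon s i) * invEval (mon s j) = toF (term (subl s j i)) := by
  obtain ⟨c1, c2, c3, c4⟩ := counts_aux s hji hin
  simp only [mon]
  rw [cross c1 c2, term, c3, c4]

lemma key2 (s : List Bool) {j i : ℕ} (hji : j ≤ i) (hin : i ≤ s.length) :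
    toF (mon s j) * invEval (mon s i) = invEval (term (subl s j i)) := by
  obtain ⟨c1, c2, c3, c4⟩ := counts_aux s hji hin
  simp only [mon]
  rw [cross' c1 c2, term, c3, c4]

lemma keydiag (s : List Bool) (i : ℕ) : toF (mon s i) * invEval (mon s i) = 1 := by
  simp only [mon]
  rw [cross le_rfl le_rfl]
  simp [toF]

lemma keyB (s : List Bool) :
    toF (gen s) * invEval (gen s)
      = ((s.length + 1 : ℕ) : F) + toF (compPoly s) + invEval (compPoly s) := by
  rw [gen_eq, toF_sum, invEval_sum, Finset.sum_mul_sum]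
  have hsplit : ∀ i ∈ Finset.range (s.length + 1),
      ∑ j ∈ Finset.range (s.length + 1), toF (mon s i) * invEval (mon s j)
      = (∑ j ∈ Finset.range i, toF (term (subl s j i)))
        + ((1 : F)
        + ∑ j ∈ Finset.Ico (i + 1) (s.length + 1), invEval (term (subl s i j))) := by
    intro i hi
    rw [Finset.mem_range] at hi
    rw [Finset.range_eq_Ico,
      ← Finset.sum_Ico_consecutive _ (Nat.zero_le i) (by omega : i ≤ s.length + 1),
      Finset.sum_eq_sum_Ico_succ_bot (by omega : i < s.length + 1)]
    congr 1
    · rw [Nat.Ico_zero_eq_range]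
      exact Finset.sum_congr rfl fun j hj =>
        key1 s (le_of_lt (Finset.mem_range.mp hj)) (by omega)
    congr 1
    · exact keydiag s i
    · refine Finset.sum_congr rfl fun j hj => ?_
      rw [Finset.mem_Ico] at hj
      exact key2 s (by omega) (by omega)
  rw [Finset.sum_congr rfl hsplit, Finset.sum_add_distrib, Finset.sum_add_distrib]
  have e1 : ∑ i ∈ Finset.range (s.length + 1), ∑ j ∈ Finset.range i, toF (term (subl s j i))
      = toF (compPoly s) := by
    rw [compPoly_tri s, toF_sum]
    exact Finset.sum_congr rfl fun e _ => (toF_sum _ _).symm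
  have e2 : ∑ i ∈ Finset.range (s.length + 1),
      ∑ j ∈ Finset.Ico (i + 1) (s.length + 1), invEval (term (subl s i j))
      = invEval (compPoly s) := by
    rw [Finset.range_eq_Ico, Finset.sum_Ico_Ico_comm']
    rw [compPoly_tri s, invEval_sum]
    refine Finset.sum_congr (Nat.Ico_zero_eq_range _) fun e he => ?_
    rw [invEval_sum, Nat.Ico_zero_eq_range]
  have e3 : ∑ _i ∈ Finset.range (s.length + 1), (1 : F) = ((s.length + 1 : ℕ) : F) := by simp
  rw [e1, e2, e3]
  ring

noncomputable def mexp (c : Multiset Bool) : Fin 2 →₀ ℕ :=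
  Finsupp.single 0 (c.count false) + Finsupp.single 1 (c.count true)

lemma mexp_apply0 (c : Multiset Bool) : mexp c 0 = c.count false := by
  simp [mexp, Finsupp.single_apply]

lemma mexp_apply1 (c : Multiset Bool) : mexp c 1 = c.count true := by
  simp [mexp, Finsupp.single_apply]

lemma mexp_inj : Function.Injective mexp := by
  intro c c' h
  have h0 : c.count false = c'.count false := by rw [← mexp_apply0, ← mexp_apply0, h]
  have h1 : c.count true = c'.count true := by rw [← mexp_apply1, ← mexp_apply1, h]
  refine Multiset.ext.mpr fun b => ?_
  cases b
  · exact h0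
  · exact h1

lemma term_eq (l : List Bool) : term l = monomial (mexp ↑l) (1 : ℤ) := by
  rw [term, X_pow_eq_monomial, X_pow_eq_monomial, monomial_mul, one_mul]
  congr 1
  rw [mexp]
  simp [Multiset.coe_count]

lemma compPoly_eq_msum (s : List Bool) :
    compPoly s = ((subComps s).map fun c => monomial (mexp c) (1 : ℤ)).sum := by
  rw [compPoly, subComps, Multiset.map_coe, Multiset.sum_coe]
  congr 1
  rw [List.map_flatMap]
  congr 1
  funext i
  rw [List.map_map]
  refine List.map_congr_left fun j _ => ?_
  exact term_eq _

lemma coeff_msum (M : Multiset (Multiset Bool)) (d : Fin 2 →₀ ℕ) :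
    coeff d ((M.map fun c => monomial (mexp c) (1 : ℤ)).sum) = ((M.map mexp).count d : ℤ) := by
  induction M using Multiset.induction_on with
  | empty => simp
  | cons c M ih =>
    simp only [Multiset.map_cons, Multiset.sum_cons, coeff_add, ih, Multiset.count_cons,
      coeff_monomial]
    split_ifs with h1 h2 h3
    · push_cast; ring
    · exact absurd h1.symm h2
    · exact absurd h3.symm h1
    · push_cast; ring

lemma stepA (s t : List Bool) : Equicomposable s t ↔ compPoly s = compPoly t := by
  constructor
  · intro h
    rw [compPoly_eq_msum, compPoly_eq_msum]
    rw [Equicomposable] at h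
    rw [h]
  · intro h
    rw [compPoly_eq_msum, compPoly_eq_msum] at h
    have hmap : (subComps s).map mexp = (subComps t).map mexp := by
      refine Multiset.ext.mpr fun d => ?_
      have := congrArg (coeff d) h
      rw [coeff_msum, coeff_msum] at this
      exact_mod_cast this
    exact Multiset.map_injective mexp_inj hmap

lemma toF_add (P Q : MvPolynomial (Fin 2) ℤ) : toF (P + Q) = toF P + toF Q :=
  map_add (algebraMap (MvPolynomial (Fin 2) ℤ) F) P Q

lemma toF_mul (P Q : MvPolynomial (Fin 2) ℤ) : toF (P * Q) = toF P * toF Q :=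
  map_mul (algebraMap (MvPolynomial (Fin 2) ℤ) F) P Q

lemma toF_C (k : ℤ) : toF (C k) = (k : F) := by
  have hC : (C k : MvPolynomial (Fin 2) ℤ) = ((k : ℤ) : MvPolynomial (Fin 2) ℤ) := by
    simp
  rw [toF, hC]
  exact map_intCast (algebraMap (MvPolynomial (Fin 2) ℤ) F) k

noncomputable def NNe (N : ℕ) : Fin 2 →₀ ℕ := Finsupp.single 0 N + Finsupp.single 1 N

lemma XXmono (N : ℕ) : (X 0 ^ N * X 1 ^ N : MvPolynomial (Fin 2) ℤ) = monomial (NNe N) 1 := by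
  rw [X_pow_eq_monomial, X_pow_eq_monomial, monomial_mul, one_mul, NNe]

lemma coeff_XX (p q : ℕ) (d : Fin 2 →₀ ℕ) :
    coeff d (X 0 ^ p * X 1 ^ q : MvPolynomial (Fin 2) ℤ)
      = if Finsupp.single 0 p + Finsupp.single 1 q = d then 1 else 0 := by
  rw [X_pow_eq_monomial, X_pow_eq_monomial, monomial_mul, one_mul, coeff_monomial]

noncomputable def reflP (s : List Bool) (N : ℕ) : MvPolynomial (Fin 2) ℤ :=
  ∑ e ∈ Finset.range (s.length + 1), ∑ i ∈ Finset.range e,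
    X 0 ^ (N - (subl s i e).count false) * X 1 ^ (N - (subl s i e).count true)

lemma subl_counts_le (s : List Bool) (i e : ℕ) :
    (subl s i e).count false ≤ s.length ∧ (subl s i e).count true ≤ s.length := by
  have hl : (subl s i e).length ≤ s.length := by
    rw [subl, List.length_take, List.length_drop]; omega
  exact ⟨le_trans List.count_le_length hl, le_trans List.count_le_length hl⟩

lemma invC (s : List Bool) {N : ℕ} (hN : s.length ≤ N) :
    toF (X 0 ^ N * X 1 ^ N) * invEval (compPoly s) = toF (reflP s N) := by
  rw [compPoly_tri, invEval_sum, Finset.mul_sum, reflP, toF_sum]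
  refine Finset.sum_congr rfl fun e he => ?_
  rw [invEval_sum, Finset.mul_sum, toF_sum]
  refine Finset.sum_congr rfl fun i hi => ?_
  obtain ⟨c0, c1⟩ := subl_counts_le s i e
  rw [term]
  exact cross (by omega) (by omega)

lemma reflP_coeff (s : List Bool) (N : ℕ) {d : Fin 2 →₀ ℕ} (hd : N < d 0 ∨ N < d 1) :
    coeff d (reflP s N) = 0 := by
  rw [reflP, coeff_sum]
  refine Finset.sum_eq_zero fun e he => ?_
  rw [coeff_sum]
  refine Finset.sum_eq_zero fun i hi => ?_
  rw [coeff_XX, if_neg]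
  intro h
  have h0 := DFunLike.congr_fun h 0
  have h1 := DFunLike.congr_fun h 1
  simp [Finsupp.single_apply] at h0 h1
  omega

lemma czero (s : List Bool) : coeff 0 (compPoly s) = 0 := by
  rw [compPoly_tri, coeff_sum]
  refine Finset.sum_eq_zero fun e he => ?_
  rw [coeff_sum]
  refine Finset.sum_eq_zero fun i hi => ?_
  rw [term, coeff_XX, if_neg]
  intro h
  rw [Finset.mem_range] at he hi
  have hlen := cfct (subl s i e)
  have hl : (subl s i e).length = min (e - i) (s.length - i) := by
    rw [subl, List.length_take, List.length_drop]
  have h0 := DFunLike.congr_fun h 0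
  have h1 := DFunLike.congr_fun h 1
  simp [Finsupp.single_apply] at h0 h1
  omega

lemma extract (s t : List Bool)
    (h : toF (gen s) * invEval (gen s) = toF (gen t) * invEval (gen t)) :
    compPoly s = compPoly t := by
  set N := s.length + t.length with hNdef
  have hs : s.length ≤ N := by omega
  have ht : t.length ≤ N := by omega
  have inj := IsFractionRing.injective (MvPolynomial (Fin 2) ℤ) F
  have lhs_eq : ∀ (u : List Bool), u.length ≤ N →
      toF (C ((u.length + 1 : ℕ) : ℤ) * (X 0 ^ N * X 1 ^ N) + compPoly u * (X 0 ^ N * X 1 ^ N)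
        + reflP u N)
      = toF (X 0 ^ N * X 1 ^ N) * (toF (gen u) * invEval (gen u)) := by
    intro u hu
    rw [keyB]
    simp only [toF_add, toF_mul, toF_C]
    rw [← invC u hu]
    simp only [toF_mul]
    push_cast
    ring
  have hpoly : C ((s.length + 1 : ℕ) : ℤ) * (X 0 ^ N * X 1 ^ N) + compPoly s * (X 0 ^ N * X 1 ^ N)
        + reflP s N
      = C ((t.length + 1 : ℕ) : ℤ) * (X 0 ^ N * X 1 ^ N) + compPoly t * (X 0 ^ N * X 1 ^ N)
        + reflP t N := by
    apply inj
    show toF _ = toF _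
    rw [lhs_eq s hs, lhs_eq t ht, h]
  refine MvPolynomial.ext _ _ fun d => ?_
  by_cases hd : d = 0
  · rw [hd, czero, czero]
  · have hd01 : 0 < d 0 ∨ 0 < d 1 := by
      by_contra hc
      push_neg at hc
      refine hd (Finsupp.ext fun j => ?_)
      fin_cases j
      · exact Nat.le_zero.mp hc.1
      · exact Nat.le_zero.mp hc.2
    have hNN0 : (d + NNe N) 0 = d 0 + N := by simp [NNe, Finsupp.single_apply]
    have hNN1 : (d + NNe N) 1 = d 1 + N := by simp [NNe, Finsupp.single_apply]
    have hne : ¬ (NNe N = d + NNe N) := fun hcon => hd (right_eq_add.mp hcon)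
    have side : N < (d + NNe N) 0 ∨ N < (d + NNe N) 1 := by
      rw [hNN0, hNN1]; omega
    have hco := congrArg (coeff (d + NNe N)) hpoly
    simp only [XXmono, C_mul_monomial, mul_one, coeff_add, coeff_mul_monomial, coeff_monomial,
      reflP_coeff s N side, reflP_coeff t N side, if_neg hne] at hco
    simpa using hco

lemma Tmono : StrictMono fun n => ∑ i ∈ Finset.range n, (i + 1) := by
  intro a b hab
  exact Finset.sum_lt_sum_of_subset (Finset.range_subset_range.mpr hab.le)
    (Finset.mem_range.mpr hab) (by simp) (Nat.succ_pos a) fun j _ _ => Nat.zero_le _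

lemma card_subComps (s : List Bool) :
    Multiset.card (subComps s) = ∑ i ∈ Finset.range s.length, (i + 1) := by
  rw [subComps, Multiset.coe_card, List.flatMap_def, List.length_flatten, List.map_map]
  have : ((List.range s.length).map
      ((fun l => l.length) ∘ fun i => (List.range (s.length - i)).map
        fun j => (((s.drop i).take (j + 1) : List Bool) : Multiset Bool))).sum
      = ∑ i ∈ Finset.range s.length, (s.length - i) := by
    rw [list_range_sum]
    exact Finset.sum_congr rfl fun i _ => by simp
  rw [this, ← Finset.sum_range_reflect (fun i => i + 1) s.length]
  refine Finset.sum_congr rfl fun j hj => ?_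
  rw [Finset.mem_range] at hj
  omega

lemma len_eq {s t : List Bool} (h : Equicomposable s t) : s.length = t.length := by
  have h' : subComps s = subComps t := h
  have hc := congrArg Multiset.card h'
  rw [card_subComps, card_subComps] at hc
  rcases lt_trichotomy s.length t.length with hl | hl | hl
  · exact absurd hc (Tmono hl).ne
  · exact hl
  · exact absurd hc.symm (Tmono hl).ne

theorem stmt6 (s t : List Bool) :
    Equicomposable s t ↔
      toF (gen s) * invEval (gen s) = toF (gen t) * invEval (gen t) := by
  constructor
  · intro h
    have hc := (stepA s t).mp h
    have hl := len_eq h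
    rw [keyB, keyB, hc, hl]
  · intro h
    exact (stepA s t).mpr (extract s t h)
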